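/- arXiv:0902.3656 — 2 statements merged into one kernel-verified Lean document; each statement's English description precedes it below -/
import Mathlib

section
/- For f continuous on ℝⁿ, f is positive definite if and only if f·g is positive definite for every continuous compactly supported positive definite function g : ℝⁿ → ℂ. -/
set_option maxHeartbeats 1000000


open scoped BigOperators ComplexOrder

def IsPosDef {V : Type*} [AddCommGroup V] (f : V → ℂ) : Prop :=
  ∀ (m : ℕ) (ξ : Fin m → V) (a : Fin m → ℂ),
    0 ≤ ∑ i, ∑ j, a i * f (ξ i - ξ j) * (starRingEnd ℂ) (a j)

open scoped Matrix
open MeasureTheory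

section Aux

lemma IsPosDef.conj_symm {V : Type*} [AddCommGroup V] {f : V → ℂ} (hf : IsPosDef f)
    (x y : V) : f (y - x) = (starRingEnd ℂ) (f (x - y)) := by
  have h0 := hf 1 ![0] ![1]
  have h1 := hf 2 ![x, y] ![1, 1]
  have h2 := hf 2 ![x, y] ![1, Complex.I]
  simp [Fin.sum_univ_two, Fin.sum_univ_one, Complex.le_def] at h0 h1 h2
  apply Complex.ext <;>
    simp only [Complex.conj_re, Complex.conj_im] <;>
    linarith [h0.2, h1.2, h2.2]

lemma IsPosDef.posSemidef {V : Type*} [AddCommGroup V] {f : V → ℂ} (hf : IsPosDef f)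
    {m : ℕ} (ξ : Fin m → V) :
    (Matrix.of fun i j => f (ξ i - ξ j)).PosSemidef := by
  rw [Matrix.posSemidef_iff_dotProduct_mulVec]
  constructor
  · ext i j
    exact (hf.conj_symm (ξ j) (ξ i)).symm
  · intro v
    have := hf m ξ (star v)
    simp only [dotProduct, Matrix.mulVec, Pi.star_apply, Matrix.of_apply,
      RCLike.star_def, Finset.mul_sum] at this ⊢
    convert this using 3 with i _ j
    rw [Complex.conj_conj, mul_assoc]

private lemma sum4_comm {α : Type*} [AddCommMonoid α] {m : ℕ}
    (F : Fin m → Fin m → Fin m → Fin m → α) :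
    ∑ i, ∑ j, ∑ k, ∑ l, F i j k l = ∑ k, ∑ l, ∑ i, ∑ j, F i j k l :=
  calc ∑ i, ∑ j, ∑ k, ∑ l, F i j k l
      = ∑ i, ∑ k, ∑ j, ∑ l, F i j k l :=
        Finset.sum_congr rfl fun _ _ => Finset.sum_comm
    _ = ∑ k, ∑ i, ∑ j, ∑ l, F i j k l := Finset.sum_comm
    _ = ∑ k, ∑ i, ∑ l, ∑ j, F i j k l :=
        Finset.sum_congr rfl fun _ _ => Finset.sum_congr rfl fun _ _ => Finset.sum_comm
    _ = ∑ k, ∑ l, ∑ i, ∑ j, F i j k l :=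
        Finset.sum_congr rfl fun _ _ => Finset.sum_comm

open scoped MatrixOrder in
lemma IsPosDef.mul {V : Type*} [AddCommGroup V] {f g : V → ℂ} (hf : IsPosDef f)
    (hg : IsPosDef g) : IsPosDef fun x => f x * g x := by
  intro m ξ a
  obtain ⟨B, hB⟩ : ∃ B : Matrix (Fin m) (Fin m) ℂ, Matrix.of (fun i j => f (ξ i - ξ j)) = Bᴴ * B :=
    CStarAlgebra.nonneg_iff_eq_star_mul_self.mp (hf.posSemidef ξ).nonneg
  obtain ⟨C, hC⟩ : ∃ C : Matrix (Fin m) (Fin m) ℂ, Matrix.of (fun i j => g (ξ i - ξ j)) = Cᴴ * C :=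
    CStarAlgebra.nonneg_iff_eq_star_mul_self.mp (hg.posSemidef ξ).nonneg
  have hBf : ∀ i j, f (ξ i - ξ j) = ∑ k, (starRingEnd ℂ) (B k i) * B k j := by
    intro i j
    have h : (Matrix.of fun i j => f (ξ i - ξ j)) i j = (Bᴴ * B) i j := by rw [hB]
    simpa [Matrix.mul_apply, Matrix.conjTranspose_apply] using h
  have hCg : ∀ i j, g (ξ i - ξ j) = ∑ k, (starRingEnd ℂ) (C k i) * C k j := by
    intro i j
    have h : (Matrix.of fun i j => g (ξ i - ξ j)) i j = (Cᴴ * C) i j := by rw [hC]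
    simpa [Matrix.mul_apply, Matrix.conjTranspose_apply] using h
  have key : ∑ i, ∑ j, a i * (f (ξ i - ξ j) * g (ξ i - ξ j)) * (starRingEnd ℂ) (a j)
      = ∑ k, ∑ l, (∑ i, a i * ((starRingEnd ℂ) (B k i) * (starRingEnd ℂ) (C l i))) *
          (starRingEnd ℂ) (∑ i, a i * ((starRingEnd ℂ) (B k i) * (starRingEnd ℂ) (C l i))) := by
    simp only [hBf, hCg, map_sum, map_mul, Complex.conj_conj, Finset.mul_sum, Finset.sum_mul]
    rw [sum4_comm, Finset.sum_comm]
    refine Finset.sum_congr rfl fun k _ => Finset.sum_congr rfl fun l _ => ?_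
    rw [Finset.sum_comm]
    exact Finset.sum_congr rfl fun i _ => Finset.sum_congr rfl fun j _ => by ring
  rw [key]
  refine Finset.sum_nonneg fun k _ => Finset.sum_nonneg fun l _ => ?_
  rw [Complex.mul_conj]
  exact_mod_cast Complex.normSq_nonneg _

lemma isPosDef_one {V : Type*} [AddCommGroup V] : IsPosDef (fun _ : V => (1 : ℂ)) := by
  intro m ξ a
  have : ∑ i, ∑ j, a i * (1 : ℂ) * (starRingEnd ℂ) (a j)
      = (∑ i, a i) * (starRingEnd ℂ) (∑ i, a i) := by
    rw [map_sum, Finset.sum_mul_sum]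
    exact Finset.sum_congr rfl fun i _ => Finset.sum_congr rfl fun j _ => by ring
  rw [this, Complex.mul_conj]
  exact_mod_cast Complex.normSq_nonneg _

lemma isPosDef_prod {ι V : Type*} [AddCommGroup V] (s : Finset ι) (F : ι → V → ℂ)
    (h : ∀ k ∈ s, IsPosDef (F k)) : IsPosDef (fun x => ∏ k ∈ s, F k x) := by
  classical
  induction s using Finset.induction_on with
  | empty => simpa using isPosDef_one
  | @insert b s hb ih =>
      simp only [Finset.prod_insert hb]
      exact (h b (Finset.mem_insert_self _ _)).mul
        (ih fun k hk => h k (Finset.mem_insert_of_mem hk))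

lemma isPosDef_comp {V W : Type*} [AddCommGroup V] [AddCommGroup W] {f : W → ℂ}
    (hf : IsPosDef f) (L : V → W) (hL : ∀ x y, L (x - y) = L x - L y) :
    IsPosDef (fun x => f (L x)) := by
  intro m ξ a
  have := hf m (fun i => L (ξ i)) a
  simpa [hL] using this

noncomputable def tri (s : ℝ) : ℝ := max (1 - |s|) 0

lemma continuous_tri : Continuous tri :=
  (continuous_const.sub continuous_abs).max continuous_const

lemma tri_zero : tri 0 = 1 := by simp [tri]

lemma tri_eq_zero {s : ℝ} (h : 1 ≤ |s|) : tri s = 0 :=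
  max_eq_right (by linarith)

lemma tri_eq_integral (s s' : ℝ) :
    tri (s - s') = ∫ t, (Set.Icc s (s+1)).indicator (fun _ => (1:ℝ)) t *
      (Set.Icc s' (s'+1)).indicator (fun _ => (1:ℝ)) t := by
  have h1 : ∀ t, (Set.Icc s (s+1)).indicator (fun _ => (1:ℝ)) t *
      (Set.Icc s' (s'+1)).indicator (fun _ => (1:ℝ)) t
      = (Set.Icc s (s+1) ∩ Set.Icc s' (s'+1)).indicator (fun _ => (1:ℝ)) t := by
    intro t
    rw [← Set.inter_indicator_mul]
    simp
  simp_rw [h1]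
  rw [integral_indicator_const _ ((measurableSet_Icc).inter measurableSet_Icc)]
  rw [Set.Icc_inter_Icc, Real.volume_real_Icc, smul_eq_mul, mul_one]
  unfold tri
  congr 1
  have : (s+1) ⊓ (s'+1) = s ⊓ s' + 1 := by
    rcases le_total s s' with h | h <;> simp [min_def, h]
  rw [this]
  rcases le_total s s' with h | h
  · rw [abs_of_nonpos (by linarith), min_eq_left h, max_eq_right h]; ring
  · rw [abs_of_nonneg (by linarith), min_eq_right h, max_eq_left h]; ring

lemma isPosDef_tri : IsPosDef (fun s : ℝ => (tri s : ℂ)) := by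
  intro m ξ a
  set u : Fin m → ℝ → ℝ := fun i => (Set.Icc (ξ i) (ξ i + 1)).indicator (fun _ => (1:ℝ)) with hu
  have hint : ∀ i j : Fin m, Integrable (fun t => u i t * u j t) := by
    intro i j
    have h : (fun t => u i t * u j t)
        = (Set.Icc (ξ i) (ξ i+1) ∩ Set.Icc (ξ j) (ξ j+1)).indicator (fun _ => (1:ℝ)) := by
      funext t
      rw [← Set.inter_indicator_mul]; simp
    rw [h, integrable_indicator_iff (measurableSet_Icc.inter measurableSet_Icc)]
    exact integrableOn_const ((measure_mono Set.inter_subset_left).trans_lt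
      (by rw [Real.volume_Icc]; exact ENNReal.ofReal_lt_top)).ne
  have hio : ∀ g : ℝ → ℝ, (∫ t, ((g t : ℝ) : ℂ)) = ((∫ t, g t : ℝ) : ℂ) := fun g =>
    integral_ofReal
  have hintc : ∀ i j : Fin m,
      Integrable (fun t => a i * ((u i t * u j t : ℝ) : ℂ) * (starRingEnd ℂ) (a j)) :=
    fun i j => (((hint i j).ofReal (𝕜 := ℂ)).const_mul _).mul_const _
  set F : ℝ → ℂ := fun t => ∑ i, a i * (u i t : ℂ) with hF
  have key : ∑ i, ∑ j, a i * ((tri (ξ i - ξ j) : ℝ) : ℂ) * (starRingEnd ℂ) (a j)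
      = ∫ t, F t * (starRingEnd ℂ) (F t) := by
    calc ∑ i, ∑ j, a i * ((tri (ξ i - ξ j) : ℝ) : ℂ) * (starRingEnd ℂ) (a j)
        = ∑ i, ∑ j, ∫ t, a i * ((u i t * u j t : ℝ) : ℂ) * (starRingEnd ℂ) (a j) := by
          refine Finset.sum_congr rfl fun i _ => Finset.sum_congr rfl fun j _ => ?_
          rw [integral_mul_const, integral_const_mul, hio, tri_eq_integral]
      _ = ∑ i, ∫ t, ∑ j, a i * ((u i t * u j t : ℝ) : ℂ) * (starRingEnd ℂ) (a j) :=
          Finset.sum_congr rfl fun i _ =>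
            (integral_finset_sum _ (fun j _ => hintc i j)).symm
      _ = ∫ t, ∑ i, ∑ j, a i * ((u i t * u j t : ℝ) : ℂ) * (starRingEnd ℂ) (a j) :=
          (integral_finset_sum _ (fun i _ =>
            integrable_finset_sum _ (fun j _ => hintc i j))).symm
      _ = ∫ t, F t * (starRingEnd ℂ) (F t) := by
          congr 1; funext t
          rw [hF, map_sum, Finset.sum_mul_sum]
          push_cast
          exact Finset.sum_congr rfl fun i _ => Finset.sum_congr rfl fun j _ => by
            rw [map_mul, Complex.conj_ofReal]; ring
  rw [key]
  have : ∀ t, F t * (starRingEnd ℂ) (F t) = ((Complex.normSq (F t) : ℝ) : ℂ) := fun t => by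
    rw [Complex.mul_conj]
  simp_rw [this]
  rw [hio]
  exact_mod_cast integral_nonneg fun t => Complex.normSq_nonneg _

end Aux

theorem stmt_8 {n : ℕ} (f : (Fin n → ℝ) → ℂ) (hf : Continuous f) :
    IsPosDef f ↔
      ∀ g : (Fin n → ℝ) → ℂ, Continuous g → HasCompactSupport g → IsPosDef g →
        IsPosDef (fun x => f x * g x) := by
  constructor
  · intro hpd g _ _ hg
    exact hpd.mul hg
  · intro H m ξ a
    set g : ℕ → (Fin n → ℝ) → ℂ :=
      fun j x => ∏ k, (tri (((j : ℝ) + 1)⁻¹ * x k) : ℂ) with hg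
    have hcont : ∀ j, Continuous (g j) := fun j =>
      continuous_finset_prod _ fun k _ =>
        Complex.continuous_ofReal.comp
          (continuous_tri.comp (continuous_const.mul (continuous_apply k)))
    have hsupp : ∀ j, HasCompactSupport (g j) := by
      intro j
      refine HasCompactSupport.intro (K := Set.univ.pi fun _ : Fin n =>
        Set.Icc (-((j : ℝ) + 1)) ((j : ℝ) + 1))
        (isCompact_univ_pi fun _ => isCompact_Icc) ?_
      intro x hx
      simp only [Set.mem_pi, Set.mem_univ, Set.mem_Icc, forall_const, not_forall] at hx
      obtain ⟨k, hk⟩ := hx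
      have hk' : (j : ℝ) + 1 ≤ |x k| := by
        by_contra hc
        push_neg at hc
        obtain ⟨h1, h2⟩ := abs_lt.mp hc
        exact hk ⟨le_of_lt h1, le_of_lt h2⟩
      refine Finset.prod_eq_zero (Finset.mem_univ k) ?_
      have hjpos : (0:ℝ) < (j : ℝ) + 1 := by positivity
      have htz : tri (((j : ℝ) + 1)⁻¹ * x k) = 0 := by
        apply tri_eq_zero
        rw [abs_mul, abs_of_pos (inv_pos.mpr hjpos)]
        calc (1:ℝ) = ((j : ℝ) + 1)⁻¹ * ((j : ℝ) + 1) := by field_simp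
          _ ≤ ((j : ℝ) + 1)⁻¹ * |x k| :=
              mul_le_mul_of_nonneg_left hk' (le_of_lt (inv_pos.mpr hjpos))
      rw [htz, Complex.ofReal_zero]
    have hpd : ∀ j, IsPosDef (g j) := by
      intro j
      have hfac : ∀ k : Fin n, IsPosDef
          (fun x : Fin n → ℝ => (tri (((j : ℝ) + 1)⁻¹ * x k) : ℂ)) := by
        intro k
        have h := isPosDef_comp (V := Fin n → ℝ) isPosDef_tri
          (fun x => ((j : ℝ) + 1)⁻¹ * x k) (fun x y => by simp only [Pi.sub_apply]; ring)
        exact h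
      have h2 := isPosDef_prod (V := Fin n → ℝ) Finset.univ
        (fun (k : Fin n) (x : Fin n → ℝ) => ((tri (((j : ℝ) + 1)⁻¹ * x k) : ℝ) : ℂ))
        (fun k _ => hfac k)
      exact h2
    have hq : ∀ j, 0 ≤ ∑ i, ∑ i', a i * (f (ξ i - ξ i') * g j (ξ i - ξ i')) *
        (starRingEnd ℂ) (a i') := fun j => H (g j) (hcont j) (hsupp j) (hpd j) m ξ a
    have htend : Filter.Tendsto
        (fun j => ∑ i, ∑ i', a i * (f (ξ i - ξ i') * g j (ξ i - ξ i')) *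
          (starRingEnd ℂ) (a i'))
        Filter.atTop (nhds (∑ i, ∑ i', a i * f (ξ i - ξ i') * (starRingEnd ℂ) (a i'))) := by
      refine tendsto_finset_sum _ fun i _ => tendsto_finset_sum _ fun i' _ => ?_
      have h1 : Filter.Tendsto (fun j => g j (ξ i - ξ i')) Filter.atTop (nhds 1) := by
        rw [show (1:ℂ) = ∏ _k : Fin n, (1:ℂ) by simp]
        refine tendsto_finset_prod _ fun k _ => ?_
        have h2 : Filter.Tendsto (fun j : ℕ => ((j : ℝ) + 1)⁻¹ * (ξ i - ξ i') k)
            Filter.atTop (nhds 0) := by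
          have h3 := tendsto_one_div_add_atTop_nhds_zero_nat.mul_const ((ξ i - ξ i') k)
          simpa [one_div] using h3
        have h3 : Continuous fun s : ℝ => (tri s : ℂ) :=
          Complex.continuous_ofReal.comp continuous_tri
        have h4 := (h3.tendsto 0).comp h2
        simpa [tri_zero, Function.comp_def] using h4
      have := ((tendsto_const_nhds (x := f (ξ i - ξ i'))).mul h1).mul
        (tendsto_const_nhds (x := (starRingEnd ℂ) (a i'))) |>.const_mul (a i)
      simpa [mul_assoc, mul_one] using this
    have hre : 0 ≤ (∑ i, ∑ i', a i * f (ξ i - ξ i') * (starRingEnd ℂ) (a i')).re := by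
      refine ge_of_tendsto' ((Complex.continuous_re.tendsto _).comp htend) fun j => ?_
      exact (Complex.le_def.mp (hq j)).1
    have him : (∑ i, ∑ i', a i * f (ξ i - ξ i') * (starRingEnd ℂ) (a i')).im = 0 := by
      have h5 : Filter.Tendsto
          (fun j => (∑ i, ∑ i', a i * (f (ξ i - ξ i') * g j (ξ i - ξ i')) *
            (starRingEnd ℂ) (a i')).im) Filter.atTop
          (nhds ((∑ i, ∑ i', a i * f (ξ i - ξ i') * (starRingEnd ℂ) (a i')).im)) :=
        (Complex.continuous_im.tendsto _).comp htend
      have h6 : ∀ j, (∑ i, ∑ i', a i * (f (ξ i - ξ i') * g j (ξ i - ξ i')) *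
          (starRingEnd ℂ) (a i')).im = 0 := fun j => ((Complex.le_def.mp (hq j)).2).symm
      simp_rw [h6] at h5
      exact tendsto_nhds_unique h5 tendsto_const_nhds
    rw [Complex.le_def]
    constructor
    · simp only [Complex.zero_re]; exact hre
    · simp only [Complex.zero_im]; exact him.symm
end

section
/- Let h : ℝˡ → ℝ be continuous and strictly positive, and suppose that for some d ∈ ℕ and some continuous function f : [0,∞) → ℝ with f(0) > 0 and f''(0) < 0 (f twice differentiable at 0, f'(0) = 0), the functions t ↦ f(γ√(h(t)))/f(0) are positive definite on ℝˡ for all γ > 0. Then e^{-λ h(t)} is positive definite on ℝˡ for every λ > 0. -/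
open scoped BigOperators ComplexOrder

def CompletelyMonotone (φ : ℝ → ℝ) : Prop :=
  ∀ (k : ℕ) (x : ℝ), 0 < x → 0 ≤ (-1 : ℝ) ^ k * iteratedDeriv k φ x

/-!
By Taylor's theorem at `0`, with `f'(0) = 0`,
`f(γ√h)/f(0) = 1 + f''(0) γ² h / (2 f(0)) + o(γ²)`. Taking `γₙ = √(C/n)` with
`C = -2 f(0) λ / f''(0)`, the functions `ψₙ = (f(γₙ√h)/f(0))ⁿ` satisfy `ψₙ → exp(-λh)` pointwise.
Each `ψₙ` is positive definite, as a power of a positive definite function (Schur product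
theorem), and positive definiteness passes to pointwise limits.
-/

open Filter Topology Asymptotics Matrix

-- Over `ℂ`, nonnegativity of the quadratic form already forces `M` to be Hermitian.
theorem Matrix.posSemidef_iff_forall_dotProduct_mulVec_nonneg {n : Type*} [Fintype n]
    {M : Matrix n n ℂ} : M.PosSemidef ↔ ∀ x : n → ℂ, 0 ≤ star x ⬝ᵥ (M *ᵥ x) := by
  classical
  rw [← Matrix.isPositive_toEuclideanLin_iff, LinearMap.isPositive_iff_complex]
  refine (EuclideanSpace.equiv n ℂ).forall_congr' fun x => ?_
  have hconj : x ⬝ᵥ star (M *ᵥ x) = star (star x ⬝ᵥ M *ᵥ x) := by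
    rw [dotProduct_star, dotProduct_comm]
  simp [EuclideanSpace.inner_eq_star_dotProduct, Complex.le_def, Complex.ext_iff, hconj, and_comm,
    eq_comm]

section PositiveDefinite

variable {V : Type*} [AddCommGroup V]

def kernelMatrix (φ : V → ℂ) {m : ℕ} (ξ : Fin m → V) : Matrix (Fin m) (Fin m) ℂ :=
  Matrix.of fun i j => φ (ξ i - ξ j)

theorem isPosDef_iff_posSemidef_kernelMatrix {φ : V → ℂ} :
    IsPosDef φ ↔ ∀ m (ξ : Fin m → V), (kernelMatrix φ ξ).PosSemidef := by
  simp only [Matrix.posSemidef_iff_forall_dotProduct_mulVec_nonneg]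
  refine forall_congr' fun m => forall_congr' fun ξ => star_involutive.surjective.forall.trans ?_
  refine forall_congr' fun a => ?_
  simp [dotProduct, mulVec, kernelMatrix, Finset.mul_sum, mul_assoc]

namespace IsPosDef

theorem mul_s18 {φ ψ : V → ℂ} (hφ : IsPosDef φ) (hψ : IsPosDef ψ) : IsPosDef (φ * ψ) := by
  rw [isPosDef_iff_posSemidef_kernelMatrix] at *
  exact fun m ξ => (hφ m ξ).hadamard (hψ m ξ)

theorem pow {φ : V → ℂ} (hφ : IsPosDef φ) {n : ℕ} (hn : n ≠ 0) : IsPosDef (φ ^ n) := by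
  induction n with
  | zero => exact absurd rfl hn
  | succ k ih =>
    rcases eq_or_ne k 0 with rfl | hk
    · simpa using hφ
    · simpa [pow_succ] using (ih hk).mul_s18 hφ

theorem of_tendsto {ι : Type*} {l : Filter ι} [l.NeBot] {φ : ι → V → ℂ} {ψ : V → ℂ}
    (hφ : ∀ᶠ i in l, IsPosDef (φ i)) (hlim : ∀ v, Tendsto (fun i => φ i v) l (𝓝 (ψ v))) :
    IsPosDef ψ := by
  intro m ξ a
  refine ge_of_tendsto ?_ (hφ.mono fun i hi => hi m ξ a)
  exact tendsto_finsetSum _ fun i _ => tendsto_finsetSum _ fun j _ =>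
    ((hlim _).const_mul _).mul_const _

end IsPosDef

end PositiveDefinite

theorem ContDiffAt.hasDerivAt_deriv {𝕜 F : Type*} [NontriviallyNormedField 𝕜]
    [NormedAddCommGroup F] [NormedSpace 𝕜 F] {f : 𝕜 → F} {x : 𝕜} (hf : ContDiffAt 𝕜 2 f x) :
    HasDerivAt (deriv f) (iteratedDeriv 2 f x) x := by
  rw [iteratedDeriv_succ, iteratedDeriv_one]
  exact ((hf.derivWithin (m := 1) (by norm_num)).differentiableAt one_ne_zero).hasDerivAt

theorem taylor_two_isLittleO_of_hasDerivAt_deriv {f : ℝ → ℝ} {x₀ D : ℝ}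
    (hf : ∀ᶠ x in 𝓝 x₀, DifferentiableAt ℝ f x) (hf' : HasDerivAt (deriv f) D x₀) :
    (fun x => f x - f x₀ - deriv f x₀ * (x - x₀) - D / 2 * (x - x₀) ^ 2) =o[𝓝 x₀]
      fun x => (x - x₀) ^ 2 := by
  obtain ⟨ε, hε, hball⟩ := Metric.eventually_nhds_iff_ball.mp hf
  have hs : 𝓝[Metric.ball x₀ ε] x₀ = 𝓝 x₀ := nhdsWithin_eq_nhds.mpr (Metric.ball_mem_nhds x₀ hε)
  have hderiv : ∀ x ∈ Metric.ball x₀ ε, HasDerivWithinAt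
      (fun x => f x - deriv f x₀ * (x - x₀) - D / 2 * (x - x₀) ^ 2)
      (deriv f x - deriv f x₀ - D * (x - x₀)) (Metric.ball x₀ ε) x := by
    intro x hx
    have hlin : HasDerivAt (fun y => deriv f x₀ * (y - x₀)) (deriv f x₀) x := by
      simpa using ((hasDerivAt_id' x).sub_const x₀).const_mul (deriv f x₀)
    have hquad : HasDerivAt (fun y => D / 2 * (y - x₀) ^ 2) (D * (x - x₀)) x := by
      refine ((((hasDerivAt_id' x).sub_const x₀).fun_pow 2).const_mul (D / 2)).congr_deriv ?_
      ring
    exact (((hball x hx).hasDerivAt.sub hlin).sub hquad).hasDerivWithinAt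
  have hslope : (fun x => deriv f x - deriv f x₀ - D * (x - x₀)) =o[𝓝[Metric.ball x₀ ε] x₀]
      fun x => (x - x₀) ^ 1 := by
    rw [hs]
    simpa [mul_comm] using hasDerivAt_iff_isLittleO.mp hf'
  have := (convex_ball x₀ ε).isLittleO_pow_succ_real (Metric.mem_ball_self hε) hderiv hslope
  rw [hs] at this
  exact this.congr_left fun x => by ring

theorem tendsto_pow_sqrt_div_of_isLittleO {f : ℝ → ℝ} {a c : ℝ}
    (hf : (fun x => f x - f 0 - a * x ^ 2) =o[𝓝 0] fun x => x ^ 2) (hf0 : f 0 ≠ 0) (hc : 0 < c) :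
    Tendsto (fun n : ℕ => (f √(c / n) / f 0) ^ n) atTop (𝓝 (Real.exp (c * a / f 0))) := by
  have hx : Tendsto (fun n : ℕ => √(c / n)) atTop (𝓝 0) := by
    have := (Real.continuous_sqrt.tendsto 0).comp (tendsto_const_div_atTop_nhds_zero_nat c)
    rwa [Real.sqrt_zero] at this
  have hrem := (hf.tendsto_div_nhds_zero.comp hx).const_add a |>.const_mul c |>.div_const (f 0)
  rw [add_zero] at hrem
  have hmul : ∀ᶠ n : ℕ in atTop,
      c * (a + (f √(c / n) - f 0 - a * √(c / n) ^ 2) / √(c / n) ^ 2) / f 0 =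
        n * (f √(c / n) / f 0 - 1) := by
    filter_upwards [eventually_ne_atTop 0] with n hn
    rw [Real.sq_sqrt (by positivity)]
    field_simp
    ring
  exact (Real.tendsto_one_add_pow_exp_of_tendsto (hrem.congr' hmul)).congr fun n => by
    rw [add_sub_cancel]

theorem stmt_18_general {l : ℕ} (h : (Fin l → ℝ) → ℝ) (hpos : ∀ t, 0 < h t)
    (f : ℝ → ℝ) (hf0 : 0 < f 0)
    (hf2 : ContDiffAt ℝ 2 f 0) (hf1 : deriv f 0 = 0)
    (hf2neg : iteratedDeriv 2 f 0 < 0)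
    (hpd : ∀ γ : ℝ, 0 < γ →
      IsPosDef (fun t : Fin l → ℝ => ((f (γ * Real.sqrt (h t)) / f 0 : ℝ) : ℂ))) :
    ∀ lam : ℝ, 0 < lam → IsPosDef (fun t => (Real.exp (-(lam * h t)) : ℂ)) := by
  intro lam hlam
  set D := iteratedDeriv 2 f 0
  have htaylor : (fun x => f x - f 0 - D / 2 * x ^ 2) =o[𝓝 0] fun x => x ^ 2 := by
    have hdiff := (hf2.eventually (by simp)).mono fun x hx => hx.differentiableAt two_ne_zero
    simpa [hf1] using taylor_two_isLittleO_of_hasDerivAt_deriv hdiff hf2.hasDerivAt_deriv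
  set C := 2 * f 0 * lam / -D
  have hC : 0 < C := div_pos (by positivity) (neg_pos.mpr hf2neg)
  set γ : ℕ → ℝ := fun n => √(C / n)
  have hlim : ∀ t, Tendsto (fun n => (f (γ n * √(h t)) / f 0) ^ n) atTop
      (𝓝 (Real.exp (-(lam * h t)))) := by
    intro t
    have hexp : C * h t * (D / 2) / f 0 = -(lam * h t) := by
      simp only [C]
      field_simp [hf2neg.ne]
    have hγ : ∀ n : ℕ, γ n * √(h t) = √(C * h t / n) := fun n => by
      rw [mul_div_right_comm, Real.sqrt_mul' _ (hpos t).le]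
    simpa only [hγ, hexp] using
      tendsto_pow_sqrt_div_of_isLittleO htaylor hf0.ne' (mul_pos hC (hpos t))
  refine IsPosDef.of_tendsto (l := atTop)
    (φ := fun n t => ((f (γ n * √(h t)) / f 0 : ℝ) : ℂ) ^ n) ?_ fun t => ?_
  · filter_upwards [eventually_ne_atTop 0] with n hn
    exact (hpd (γ n) (by positivity)).pow hn
  · simpa [Function.comp_def] using (Complex.continuous_ofReal.tendsto _).comp (hlim t)

theorem stmt_18 {l : ℕ} (h : (Fin l → ℝ) → ℝ) (hc : Continuous h) (hpos : ∀ t, 0 < h t)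
    (f : ℝ → ℝ) (hfc : ContinuousOn f (Set.Ici 0)) (hf0 : 0 < f 0)
    (hf2 : ContDiffAt ℝ 2 f 0) (hf1 : deriv f 0 = 0)
    (hf2neg : iteratedDeriv 2 f 0 < 0)
    (hpd : ∀ γ : ℝ, 0 < γ →
      IsPosDef (fun t : Fin l → ℝ => ((f (γ * Real.sqrt (h t)) / f 0 : ℝ) : ℂ))) :
    ∀ lam : ℝ, 0 < lam → IsPosDef (fun t => (Real.exp (-(lam * h t)) : ℂ)) :=
  stmt_18_general h hpos f hf0 hf2 hf1 hf2neg hpd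
end
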